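/- arXiv:2306.13480 — 3 statements merged into one kernel-verified Lean document; each statement's English description precedes it below -/
import Mathlib

section
/- Let (Ω, F, P) be a probability space, (D, 𝒜, μ) a finite measure space, H = L²(D, μ). Let V⁽¹⁾ be the exponential Euler scheme with data (rates λ_j, coefficient maps F_j, basis vectors e_j), and let V⁽²⁾ be the exponential Euler scheme driven by the same noise variables R_k^j with data (λ_j, F̃_j, e_j), where the maps F̃_j : H → ℝ satisfy |F̃_j(u) − F_j(u)| ≤ C·R⁻² for all u ∈ H, for fixed constants C > 0 and R ≥ 1. Set ε_{k,j}⁽²⁾ := E|V_{k,j}⁽¹⁾ − V_{k,j}⁽²⁾|. Then for every k ∈ {0,…,M}: E‖V_k⁽¹⁾ − V_k⁽²⁾‖ ≤ Σ_{j=1}^N ε_{k,j}⁽²⁾, and for every k ∈ {0,…,M−1} and j ∈ {1,…,N}: ε_{k+1,j}⁽²⁾ ≤ e^{−λ_j h} ε_{k,j}⁽²⁾ + ((1 − e^{−λ_j h})/λ_j)·( L·Σ_{i=1}^N ε_{k,i}⁽²⁾ + C·R⁻² ). -/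
open MeasureTheory RealInnerProductSpace Finset

/-- The `H`-valued element with coefficients `c` in the (approximate) basis `b`. -/
noncomputable def vecOf {H : Type*} [AddCommMonoid H] [Module ℝ H] {N : ℕ}
    (b : Fin N → H) (c : Fin N → ℝ) : H :=
  ∑ j, c j • b j

/-- `V` is an exponential Euler scheme with `M` time steps of size `h`, noise variances `q`,
noise variables `Rn`, rates `ν`, coefficient maps `G` and basis vectors `b`:
`v_{k+1,j} = e^{-ν_j h} v_{k,j} + ((1 - e^{-ν_j h})/ν_j) G_j(v_k) + σ(ν_j, q_j) R_k^j`. -/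
def IsExpEulerScheme {Ω H : Type*} [AddCommMonoid H] [Module ℝ H] {N : ℕ}
    (M : ℕ) (h : ℝ) (q : Fin N → ℝ) (Rn : ℕ → Fin N → Ω → ℝ)
    (ν : Fin N → ℝ) (G : Fin N → H → ℝ) (b : Fin N → H)
    (V : ℕ → Fin N → Ω → ℝ) : Prop :=
  ∀ k < M, ∀ j, ∀ ω, V (k + 1) j ω =
    Real.exp (-ν j * h) * V k j ω
      + ((1 - Real.exp (-ν j * h)) / ν j) * G j (vecOf b fun i => V k i ω)
      + Real.sqrt (q j * (1 - Real.exp (-(2 * ν j) * h)) / (2 * ν j)) * Rn k j ω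

theorem numerical_integration_error_recursion
    {Ω : Type*} [MeasureSpace Ω] [IsProbabilityMeasure (volume : Measure Ω)]
    {D : Type*} [MeasurableSpace D] (μ : Measure D) [IsFiniteMeasure μ]
    (N M : ℕ) (h : ℝ) (hh : 0 < h)
    (e : Fin N → Lp ℝ 2 μ) (he : Orthonormal ℝ e)
    (lam : Fin N → ℝ) (hlam : ∀ j, 0 < lam j)
    (q : Fin N → ℝ) (hq : ∀ j, q j ∈ Set.Icc (0 : ℝ) 1)
    (L : ℝ) (hL : 0 < L)
    (f : ℝ → ℝ) (hf : LipschitzWith L.toNNReal f) (hf0 : f 0 = 0)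
    (F : Lp ℝ 2 μ → Lp ℝ 2 μ) (hF : ∀ u, F u = hf.compLp hf0 u)
    (Fj : Fin N → Lp ℝ 2 μ → ℝ) (hFj : ∀ j u, Fj j u = ⟪F u, e j⟫)
    (Rn : ℕ → Fin N → Ω → ℝ) (hRn : ∀ k < M, ∀ j, ∫ ω, (Rn k j ω) ^ 2 = 1)
    (C R : ℝ) (hC : 0 < C) (hR : 1 ≤ R)
    (Ftil : Fin N → Lp ℝ 2 μ → ℝ)
    (hFtil : ∀ j u, |Ftil j u - Fj j u| ≤ C * R ^ (-2 : ℤ))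
    (V1 V2 : ℕ → Fin N → Ω → ℝ)
    (hV1 : IsExpEulerScheme M h q Rn lam Fj e V1)
    (hV2 : IsExpEulerScheme M h q Rn lam Ftil e V2)
    (hIntV1 : ∀ k ≤ M, ∀ j, Integrable fun ω => V1 k j ω)
    (hIntV2 : ∀ k ≤ M, ∀ j, Integrable fun ω => V2 k j ω)
    (hIntF1 : ∀ k ≤ M, ∀ j, Integrable fun ω => Fj j (vecOf e fun i => V1 k i ω))
    (hIntF2 : ∀ k ≤ M, ∀ j, Integrable fun ω => Ftil j (vecOf e fun i => V2 k i ω))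
    (ε2 : ℕ → Fin N → ℝ)
    (hε2 : ∀ k j, ε2 k j = ∫ ω, |V1 k j ω - V2 k j ω|) :
    (∀ k ≤ M,
      ∫ ω, ‖(vecOf e fun i => V1 k i ω) - vecOf e fun i => V2 k i ω‖ ≤ ∑ j, ε2 k j) ∧
    ∀ k < M, ∀ j, ε2 (k + 1) j ≤
      Real.exp (-lam j * h) * ε2 k j
        + ((1 - Real.exp (-lam j * h)) / lam j) *
            (L * ∑ i, ε2 k i + C * R ^ (-2 : ℤ)) := by
  have hL0 : (0:ℝ) ≤ L := hL.le
  have hnorm : ∀ (c : Fin N → ℝ), ‖vecOf e c‖ ≤ ∑ i, |c i| := by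
    intro c
    calc ‖vecOf e c‖ ≤ ∑ j, ‖c j • e j‖ := norm_sum_le _ _
      _ = ∑ j, |c j| := by
          refine Finset.sum_congr rfl fun j _ => ?_
          rw [norm_smul, he.1 j, Real.norm_eq_abs, mul_one]
  have hsub : ∀ (c1 c2 : Fin N → ℝ),
      vecOf e c1 - vecOf e c2 = vecOf e (fun i => c1 i - c2 i) := by
    intro c1 c2
    simp [vecOf, sub_smul, Finset.sum_sub_distrib]
  have hFlip : ∀ (j : Fin N) (u v : Lp ℝ 2 μ), |Fj j u - Fj j v| ≤ L * ‖u - v‖ := by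
    intro j u v
    rw [hFj, hFj, ← inner_sub_left]
    calc |⟪F u - F v, e j⟫| ≤ ‖F u - F v‖ * ‖e j‖ := abs_real_inner_le_norm _ _
      _ = ‖F u - F v‖ := by rw [he.1 j, mul_one]
      _ ≤ L * ‖u - v‖ := by
          rw [hF, hF]
          have := hf.norm_compLp_sub_le hf0 u v
          rwa [Real.coe_toNNReal _ hL0] at this
  have hIntd : ∀ k ≤ M, ∀ j, Integrable fun ω => |V1 k j ω - V2 k j ω| :=
    fun k hk j => ((hIntV1 k hk j).sub (hIntV2 k hk j)).abs
  have part1 : ∀ k ≤ M,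
      ∫ ω, ‖(vecOf e fun i => V1 k i ω) - vecOf e fun i => V2 k i ω‖ ≤ ∑ j, ε2 k j := by
    intro k hk
    have hint : Integrable fun ω => ∑ i, |V1 k i ω - V2 k i ω| :=
      integrable_finset_sum _ fun i _ => hIntd k hk i
    calc ∫ ω, ‖(vecOf e fun i => V1 k i ω) - vecOf e fun i => V2 k i ω‖
        ≤ ∫ ω, ∑ i, |V1 k i ω - V2 k i ω| := by
          refine integral_mono_of_nonneg (Filter.Eventually.of_forall fun ω => norm_nonneg _)
            hint (Filter.Eventually.of_forall fun ω => ?_)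
          dsimp only
          rw [hsub]
          exact hnorm _
      _ = ∑ j, ε2 k j := by
          rw [integral_finset_sum _ fun i _ => hIntd k hk i]
          exact Finset.sum_congr rfl fun j _ => (hε2 k j).symm
  refine ⟨part1, fun k hk j => ?_⟩
  set A := Real.exp (-lam j * h) with hA
  set B := (1 - Real.exp (-lam j * h)) / lam j with hB
  have hA0 : 0 ≤ A := (Real.exp_pos _).le
  have hB0 : 0 ≤ B := by
    apply div_nonneg _ (hlam j).le
    have : Real.exp (-lam j * h) ≤ 1 := by
      calc Real.exp (-lam j * h) ≤ Real.exp 0 :=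
            Real.exp_le_exp.mpr (by nlinarith [mul_pos (hlam j) hh])
        _ = 1 := Real.exp_zero
    linarith
  have hCR0 : 0 ≤ C * R ^ (-2 : ℤ) := by positivity
  have hkM : k ≤ M := hk.le
  -- pointwise bound
  have key : ∀ ω, |V1 (k+1) j ω - V2 (k+1) j ω| ≤
      A * |V1 k j ω - V2 k j ω|
        + B * (L * ∑ i, |V1 k i ω - V2 k i ω| + C * R ^ (-2 : ℤ)) := by
    intro ω
    have h1 := hV1 k hk j ω
    have h2 := hV2 k hk j ω
    set u := vecOf e fun i => V1 k i ω with hu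
    set v := vecOf e fun i => V2 k i ω with hv
    have hdiff : V1 (k+1) j ω - V2 (k+1) j ω
        = A * (V1 k j ω - V2 k j ω) + B * (Fj j u - Ftil j v) := by
      rw [h1, h2]; ring
    rw [hdiff]
    have hFd : |Fj j u - Ftil j v| ≤ L * ∑ i, |V1 k i ω - V2 k i ω| + C * R ^ (-2 : ℤ) := by
      calc |Fj j u - Ftil j v| ≤ |Fj j u - Fj j v| + |Fj j v - Ftil j v| := abs_sub_le _ _ _
        _ ≤ L * ‖u - v‖ + C * R ^ (-2 : ℤ) := by
            gcongr
            · exact hFlip j u v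
            · rw [abs_sub_comm]; exact hFtil j v
        _ ≤ L * ∑ i, |V1 k i ω - V2 k i ω| + C * R ^ (-2 : ℤ) := by
            gcongr
            rw [hu, hv, hsub]
            exact hnorm _
    calc |A * (V1 k j ω - V2 k j ω) + B * (Fj j u - Ftil j v)|
        ≤ |A * (V1 k j ω - V2 k j ω)| + |B * (Fj j u - Ftil j v)| := abs_add_le _ _
      _ = A * |V1 k j ω - V2 k j ω| + B * |Fj j u - Ftil j v| := by
          rw [abs_mul, abs_mul, abs_of_nonneg hA0, abs_of_nonneg hB0]
      _ ≤ A * |V1 k j ω - V2 k j ω|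
            + B * (L * ∑ i, |V1 k i ω - V2 k i ω| + C * R ^ (-2 : ℤ)) := by gcongr
  have hintg : Integrable fun ω => A * |V1 k j ω - V2 k j ω|
      + B * (L * ∑ i, |V1 k i ω - V2 k i ω| + C * R ^ (-2 : ℤ)) := by
    apply Integrable.add
    · exact (hIntd k hkM j).const_mul _
    · apply Integrable.const_mul
      apply Integrable.add
      · exact (integrable_finset_sum _ fun i _ => hIntd k hkM i).const_mul _
      · exact integrable_const _
  calc ε2 (k+1) j = ∫ ω, |V1 (k+1) j ω - V2 (k+1) j ω| := hε2 _ _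
    _ ≤ ∫ ω, (A * |V1 k j ω - V2 k j ω|
          + B * (L * ∑ i, |V1 k i ω - V2 k i ω| + C * R ^ (-2 : ℤ))) :=
        integral_mono_of_nonneg (Filter.Eventually.of_forall fun ω => abs_nonneg _)
          hintg (Filter.Eventually.of_forall key)
    _ = A * ε2 k j + B * (L * ∑ i, ε2 k i + C * R ^ (-2 : ℤ)) := by
        have i0 : Integrable (fun ω => L * ∑ i, |V1 k i ω - V2 k i ω|) volume :=
          (integrable_finset_sum _ fun i _ => hIntd k hkM i).const_mul _
        have i2 : Integrable
            (fun ω => L * ∑ i, |V1 k i ω - V2 k i ω| + C * R ^ (-2 : ℤ)) volume :=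
          i0.add (integrable_const _)
        rw [integral_add ((hIntd k hkM j).const_mul _) (i2.const_mul _),
          integral_const_mul, integral_const_mul,
          integral_add i0 (integrable_const _),
          integral_const_mul, integral_finset_sum _ fun i _ => hIntd k hkM i,
          integral_const, probReal_univ]
        simp only [ENNReal.toReal_one, smul_eq_mul, one_mul]
        rw [hε2]
        have hs : ∑ i, ∫ ω, |V1 k i ω - V2 k i ω| = ∑ i, ε2 k i :=
          Finset.sum_congr rfl fun i _ => (hε2 k i).symm
        rw [hs]
end

section
/- Let m, p ∈ ℕ, μ ∈ ℂ, r > 0, and let λ₁, …, λ_p ∈ ℂ be distinct points with |λ_n − μ| < r for each n. Let v_n, w_n ∈ ℂ^m for n = 1, …, p, let U ⊆ ℂ be an open set containing the closed disc {z : |z − μ| ≤ r}, let R : U → Matrix(m, m, ℂ) be holomorphic (complex differentiable) on U, and let f : U → ℂ be holomorphic on U. Then the contour integral over the circle of center μ and radius r satisfies (1/(2πi))·∮_{|z−μ|=r} f(z)·( Σ_{n=1}^p (z − λ_n)^{−1}·v_n w_n^* + R(z) ) dz = Σ_{n=1}^p f(λ_n)·v_n w_n^*, where v_n w_n^* denotes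 the m×m matrix with entries (v_n)_i·conj((w_n)_j). -/
open scoped Real

lemma circleIntegral_add' {E : Type*} [NormedAddCommGroup E] [NormedSpace ℂ E] {c : ℂ} {R : ℝ}
    {f g : ℂ → E} (hf : CircleIntegrable f c R) (hg : CircleIntegrable g c R) :
    (∮ z in C(c, R), f z + g z) = (∮ z in C(c, R), f z) + ∮ z in C(c, R), g z := by
  simp only [circleIntegral, smul_add, intervalIntegral.integral_add hf.out hg.out]

lemma circleIntegrable_finset_sum {ι : Type*} (s : Finset ι) (F : ι → ℂ → ℂ) (c : ℂ) (R : ℝ)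
    (h : ∀ i ∈ s, CircleIntegrable (F i) c R) :
    CircleIntegrable (fun z => ∑ i ∈ s, F i z) c R := by
  classical
  induction s using Finset.cons_induction with
  | empty => simpa using circleIntegrable_const (0 : ℂ) c R
  | cons a s ha ih =>
    simp only [Finset.sum_cons]
    exact (h a (Finset.mem_cons_self _ _)).add
      (ih fun i hi => h i (Finset.mem_cons_of_mem hi))

lemma circleIntegral_finset_sum {ι : Type*} (s : Finset ι) (F : ι → ℂ → ℂ) (c : ℂ) (R : ℝ)
    (h : ∀ i ∈ s, CircleIntegrable (F i) c R) :
    (∮ z in C(c, R), ∑ i ∈ s, F i z) = ∑ i ∈ s, ∮ z in C(c, R), F i z := by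
  classical
  induction s using Finset.cons_induction with
  | empty => simp [circleIntegral]
  | cons a s ha ih =>
    simp only [Finset.sum_cons]
    rw [circleIntegral_add' (h a (Finset.mem_cons_self _ _))
      (circleIntegrable_finset_sum s F c R fun i hi => h i (Finset.mem_cons_of_mem hi)),
      ih fun i hi => h i (Finset.mem_cons_of_mem hi)]

theorem contour_integral_keldysh_decomposition
    (m p : ℕ) (μ : ℂ) (r : ℝ) (hr : 0 < r)
    (lam : Fin p → ℂ) (hlam_distinct : Function.Injective lam)
    (hlam_in : ∀ n, ‖lam n - μ‖ < r)
    (v w : Fin p → Fin m → ℂ)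
    (U : Set ℂ) (hU : IsOpen U) (hball : Metric.closedBall μ r ⊆ U)
    (R : ℂ → Matrix (Fin m) (Fin m) ℂ)
    (hR : ∀ i j, DifferentiableOn ℂ (fun z => R z i j) U)
    (f : ℂ → ℂ) (hf : DifferentiableOn ℂ f U) :
    ∀ i j, (2 * π * Complex.I)⁻¹ *
        (∮ z in C(μ, r), f z *
          ((∑ n, (z - lam n)⁻¹ * (v n i * starRingEnd ℂ (w n j))) + R z i j)) =
      ∑ n, f (lam n) * (v n i * starRingEnd ℂ (w n j)) := by
  intro i j
  set c : Fin p → ℂ := fun n => v n i * starRingEnd ℂ (w n j) with hc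
  have hsph : Metric.sphere μ r ⊆ U :=
    (Metric.sphere_subset_closedBall).trans hball
  have hball' : Metric.ball μ r ⊆ U := (Metric.ball_subset_closedBall).trans hball
  have hfc : ContinuousOn f (Metric.sphere μ r) := (hf.continuousOn).mono hsph
  -- integrability of each summand
  have hint : ∀ n : Fin p, CircleIntegrable (fun z => f z * ((z - lam n)⁻¹ * c n)) μ r := by
    intro n
    apply ContinuousOn.circleIntegrable hr.le
    apply hfc.mul
    apply ContinuousOn.mul _ continuousOn_const
    apply ContinuousOn.inv₀ (by fun_prop)
    intro z hz
    intro hzero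
    have : z = lam n := by linear_combination hzero
    subst this
    rw [Metric.mem_sphere, dist_eq_norm] at hz
    exact absurd hz (by simpa using (hlam_in n).ne)
  have hintR : CircleIntegrable (fun z => f z * R z i j) μ r :=
    ContinuousOn.circleIntegrable hr.le (hfc.mul (((hR i j).continuousOn).mono hsph))
  have hintS : CircleIntegrable (fun z => ∑ n, f z * ((z - lam n)⁻¹ * c n)) μ r :=
    circleIntegrable_finset_sum _ _ _ _ fun n _ => hint n
  -- rewrite integrand
  have hre : ∀ z : ℂ, f z * ((∑ n, (z - lam n)⁻¹ * c n) + R z i j)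
      = (∑ n, f z * ((z - lam n)⁻¹ * c n)) + f z * R z i j := by
    intro z
    rw [mul_add, Finset.mul_sum]
  change (2 * π * Complex.I)⁻¹ * (∮ z in C(μ, r), f z * ((∑ n, (z - lam n)⁻¹ * c n) + R z i j)) = ∑ n, f (lam n) * c n
  simp only [hre]
  rw [circleIntegral_add' hintS hintR]
  -- the R part vanishes
  have hRzero : (∮ z in C(μ, r), f z * R z i j) = 0 := by
    refine Complex.circleIntegral_eq_zero_of_differentiable_on_off_countable hr.le
      Set.countable_empty ?_ ?_
    · exact ((hf.continuousOn).mono hball).mul (((hR i j).continuousOn).mono hball)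
    · intro z hz
      have hzU : z ∈ U := hball' hz.1
      exact ((hf.differentiableAt (hU.mem_nhds hzU)).mul
        ((hR i j).differentiableAt (hU.mem_nhds hzU)))
  -- swap sum and integral, apply Cauchy formula
  rw [circleIntegral_finset_sum _ _ _ _ (fun n _ => hint n)]
  have hcau : ∀ n : Fin p, (∮ z in C(μ, r), f z * ((z - lam n)⁻¹ * c n))
      = 2 * π * Complex.I * (f (lam n) * c n) := by
    intro n
    have hd : DifferentiableOn ℂ (fun z => f z * c n) (Metric.closedBall μ r) :=
      (hf.mono hball).mul_const _
    have hw : lam n ∈ Metric.ball μ r := by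
      rw [Metric.mem_ball, dist_eq_norm]; simpa using hlam_in n
    have := hd.circleIntegral_sub_inv_smul hw
    simp only [smul_eq_mul] at this
    rw [← this]
    apply circleIntegral.integral_congr hr.le
    intro z _
    ring
  simp only [hcau, hRzero, add_zero, ← Finset.mul_sum]
  have h2pi : (2 * ↑π * Complex.I) ≠ 0 := by
    simp [Real.pi_ne_zero, Complex.I_ne_zero, Complex.ofReal_ne_zero]
  field_simp
end

section
/- Let m, ℓ, k ∈ ℕ and let V̂ ∈ ℂ^{m×ℓ}, V, W ∈ ℂ^{m×k}, Λ ∈ ℂ^{k×k}, and define A₀ = V·W^*·V̂ and A₁ = V·Λ·W^*·V̂. Suppose V₀ ∈ ℂ^{m×k}, Σ₀ ∈ ℂ^{k×k}, W₀ ∈ ℂ^{ℓ×k} and S ∈ ℂ^{k×k} satisfy: A₀ = V₀·Σ₀·W₀^*, V₀^*·V₀ = I_k, W₀^*·W₀ = I_k, Σ₀ is invertible, S is invertible, and V = V₀·S. Then V₀^*·A₁·W₀·Σ₀^{−1} = S·Λ·S^{−1}; in particular, V₀^*·A₁·W₀·Σ₀^{−1} is similar to Λ, so it has the same eigenvalues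 as Λ. -/
open Matrix

/-! The isometry `V₀` can be cancelled from both factorisations `A₀ = V₀ S (W^* V̂) = V₀ Σ₀ W₀^*`,
which identifies `W^* V̂ = S⁻¹ Σ₀ W₀^*`. Substituting this into `A₁ = V₀ S Λ (W^* V̂)` and
cancelling `V₀` and `W₀` gives `V₀^* A₁ W₀ Σ₀⁻¹ = S Λ S⁻¹`, and conjugation by a unit
preserves the spectrum. -/

namespace Matrix

variable {m n p : Type*} [Fintype m] [Fintype n] [DecidableEq n]

theorem conjTranspose_mul_cancel_left {R : Type*} [Semiring R] [StarRing R]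
    {U : Matrix m n R} (hU : Uᴴ * U = 1) (X : Matrix n p R) : Uᴴ * (U * X) = X := by
  rw [← Matrix.mul_assoc, hU, Matrix.one_mul]

variable {R : Type*} [CommRing R]

theorem eq_nonsing_inv_mul_of_isometry_mul_eq [StarRing R] {U : Matrix m n R} (hU : Uᴴ * U = 1)
    {S D : Matrix n n R} (hS : IsUnit S.det) {B C : Matrix n p R}
    (h : U * S * B = U * D * C) : B = S⁻¹ * D * C := by
  have hSB : S * B = D * C :=
    calc S * B = Uᴴ * (U * (S * B)) := (conjTranspose_mul_cancel_left hU _).symm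
      _ = Uᴴ * (U * (D * C)) := by rw [← Matrix.mul_assoc U, h, Matrix.mul_assoc]
      _ = D * C := conjTranspose_mul_cancel_left hU _
  rw [Matrix.mul_assoc, ← hSB, nonsing_inv_mul_cancel_left _ _ hS]

theorem spectrum_mul_mul_nonsing_inv {S : Matrix n n R} (hS : IsUnit S.det)
    (A : Matrix n n R) : spectrum R (S * A * S⁻¹) = spectrum R A := by
  obtain ⟨u, rfl⟩ := (isUnit_iff_isUnit_det S).mpr hS
  rw [← coe_units_inv]
  exact spectrum.units_conjugate

end Matrix

theorem beyn_reduced_matrix_similar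
    (m l k : ℕ)
    (Vhat : Matrix (Fin m) (Fin l) ℂ) (V W : Matrix (Fin m) (Fin k) ℂ)
    (Lam S Sig0 : Matrix (Fin k) (Fin k) ℂ)
    (V0 : Matrix (Fin m) (Fin k) ℂ) (W0 : Matrix (Fin l) (Fin k) ℂ)
    (A0 A1 : Matrix (Fin m) (Fin l) ℂ)
    (hA0 : A0 = V * Wᴴ * Vhat) (hA1 : A1 = V * Lam * Wᴴ * Vhat)
    (hSVD : A0 = V0 * Sig0 * W0ᴴ)
    (hV0 : V0ᴴ * V0 = 1) (hW0 : W0ᴴ * W0 = 1)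
    (hSig0 : IsUnit Sig0.det) (hS : IsUnit S.det)
    (hVS : V = V0 * S) :
    V0ᴴ * A1 * W0 * Sig0⁻¹ = S * Lam * S⁻¹ ∧
      spectrum ℂ (V0ᴴ * A1 * W0 * Sig0⁻¹) = spectrum ℂ Lam := by
  have hWVhat : Wᴴ * Vhat = S⁻¹ * Sig0 * W0ᴴ :=
    eq_nonsing_inv_mul_of_isometry_mul_eq hV0 hS <| by
      simp only [← hSVD, hA0, hVS, Matrix.mul_assoc]
  have hreduced : V0ᴴ * A1 * W0 * Sig0⁻¹ = S * Lam * S⁻¹ :=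
    calc V0ᴴ * A1 * W0 * Sig0⁻¹ = V0ᴴ * (V0 * (S * Lam * (Wᴴ * Vhat) * W0 * Sig0⁻¹)) := by
          simp only [hA1, hVS, Matrix.mul_assoc]
      _ = S * Lam * S⁻¹ * Sig0 * (W0ᴴ * W0) * Sig0⁻¹ := by
          rw [conjTranspose_mul_cancel_left hV0, hWVhat]
          simp only [Matrix.mul_assoc]
      _ = S * Lam * S⁻¹ := by
          rw [hW0, Matrix.mul_one, mul_nonsing_inv_cancel_right _ _ hSig0]
  exact ⟨hreduced, hreduced ▸ spectrum_mul_mul_nonsing_inv hS Lam⟩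
end
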